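/- Under a completely randomized assignment with r ≥ 2 replications, for every nonempty subset A ⊆ {1,…,K} the Neymanian variance estimator V̂_A = (1/(2^{2(K−1)} r)) Σ_z s²(z) satisfies E[V̂_A] = Var(τ̂_A) + (1/N) S_A²; in particular E[V̂_A] ≥ Var(τ̂_A), so the Neymanian estimator is in expectation an upper bound on the true sampling variance of τ̂_A. -/

import Mathlib

open Finset

noncomputable section

/-- A treatment combination in a 2^K factorial design: each of the K factors
is at its low level (`false`, coded −1) or high level (`true`, coded +1). -/
abbrev Combo (K : ℕ) := Fin K → Bool

/-- The completely randomized assignments: each of the 2^K treatment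
combinations receives exactly `r` of the `N` units. -/
def Assignments (K N r : ℕ) : Finset (Fin N → Combo K) :=
  Finset.univ.filter (fun ω => ∀ z : Combo K, (Finset.univ.filter (fun i => ω i = z)).card = r)

/-- Expectation over the uniform distribution on completely randomized assignments. -/
def expect (K N r : ℕ) (f : (Fin N → Combo K) → ℝ) : ℝ :=
  (∑ ω ∈ Assignments K N r, f ω) / ((Assignments K N r).card : ℝ)

/-- Variance over the uniform distribution on completely randomized assignments. -/
def variance (K N r : ℕ) (f : (Fin N → Combo K) → ℝ) : ℝ :=
  expect K N r (fun ω => (f ω - expect K N r f) ^ 2)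

/-- Covariance over the uniform distribution on completely randomized assignments. -/
def covariance (K N r : ℕ) (f g : (Fin N → Combo K) → ℝ) : ℝ :=
  expect K N r (fun ω => (f ω - expect K N r f) * (g ω - expect K N r g))

/-- The assignment indicator W_i(z). -/
def Wvar (K N : ℕ) (ω : Fin N → Combo K) (i : Fin N) (z : Combo K) : ℝ :=
  if ω i = z then 1 else 0

/-- The population mean Ȳ(z) of the potential outcomes under z. -/
def Ybar (K N : ℕ) (Y : Fin N → Combo K → ℝ) (z : Combo K) : ℝ :=
  (∑ i, Y i z) / (N : ℝ)

/-- The observed treatment mean Ȳ^obs(z) = (1/r) Σ_{i : W_i(z)=1} Y_i(z). -/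
def YbarObs (K N r : ℕ) (Y : Fin N → Combo K → ℝ)
    (ω : Fin N → Combo K) (z : Combo K) : ℝ :=
  (∑ i, if ω i = z then Y i z else 0) / (r : ℝ)

/-- Finite-population variance S²(z) (divisor N−1). -/
def Ssq (K N : ℕ) (Y : Fin N → Combo K → ℝ) (z : Combo K) : ℝ :=
  (∑ i, (Y i z - Ybar K N Y z) ^ 2) / ((N : ℝ) - 1)

/-- Finite-population covariance S²(z, z*) (divisor N−1). -/
def Scov (K N : ℕ) (Y : Fin N → Combo K → ℝ) (z zs : Combo K) : ℝ :=
  (∑ i, (Y i z - Ybar K N Y z) * (Y i zs - Ybar K N Y zs)) / ((N : ℝ) - 1)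

/-- The contrast g_A(z) = Π_{k ∈ A} z_k ∈ {−1, +1}. -/
def gA (K : ℕ) (A : Finset (Fin K)) (z : Combo K) : ℝ :=
  ∏ k ∈ A, (if z k then (1 : ℝ) else -1)

/-- The unit-level factorial effect τ_{iA} = 2^{−(K−1)} Σ_z g_A(z) Y_i(z). -/
def tauUnit (K N : ℕ) (Y : Fin N → Combo K → ℝ) (A : Finset (Fin K)) (i : Fin N) : ℝ :=
  (∑ z : Combo K, gA K A z * Y i z) / (2 : ℝ) ^ (K - 1)

/-- The population-level factorial effect τ̄_A = (1/N) Σ_i τ_{iA}. -/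
def tauBar (K N : ℕ) (Y : Fin N → Combo K → ℝ) (A : Finset (Fin K)) : ℝ :=
  (∑ i, tauUnit K N Y A i) / (N : ℝ)

/-- The estimated factorial effect τ̂_A = 2^{−(K−1)} Σ_z g_A(z) Ȳ^obs(z). -/
def tauHat (K N r : ℕ) (Y : Fin N → Combo K → ℝ) (A : Finset (Fin K))
    (ω : Fin N → Combo K) : ℝ :=
  (∑ z : Combo K, gA K A z * YbarObs K N r Y ω z) / (2 : ℝ) ^ (K - 1)

/-- The finite-population variance S_A² of the unit-level factorial effects. -/
def SsqA (K N : ℕ) (Y : Fin N → Combo K → ℝ) (A : Finset (Fin K)) : ℝ :=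
  (∑ i, (tauUnit K N Y A i - tauBar K N Y A) ^ 2) / ((N : ℝ) - 1)

/-- Strict additivity: unit-level differences of potential outcomes between any
two treatment combinations are constant across units. -/
def StrictAdditivity (K N : ℕ) (Y : Fin N → Combo K → ℝ) : Prop :=
  ∀ z zs : Combo K, ∀ i i' : Fin N, Y i z - Y i zs = Y i' z - Y i' zs

/-- Compound symmetry: common variance S² > 0 and common correlation ρ,
i.e. S²(z) = S² for all z and S²(z,z*) = ρ S² for all z ≠ z*. -/
def CompoundSymmetry (K N : ℕ) (Y : Fin N → Combo K → ℝ) (S2 ρ : ℝ) : Prop :=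
  0 < S2 ∧ (∀ z : Combo K, Ssq K N Y z = S2) ∧
    ∀ z zs : Combo K, z ≠ zs → Scov K N Y z zs = ρ * S2

/-- The sample variance s²(z) of the observed outcomes in treatment group z. -/
def sampleVar (K N r : ℕ) (Y : Fin N → Combo K → ℝ)
    (ω : Fin N → Combo K) (z : Combo K) : ℝ :=
  (∑ i, if ω i = z then (Y i z - YbarObs K N r Y ω z) ^ 2 else 0) / ((r : ℝ) - 1)

/-- The Neymanian variance estimator V̂_A = (1/(2^{2(K−1)} r)) Σ_z s²(z). -/
def VhatNey (K N r : ℕ) (Y : Fin N → Combo K → ℝ) (ω : Fin N → Combo K) : ℝ :=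
  (∑ z : Combo K, sampleVar K N r Y ω z) / ((2 : ℝ) ^ (2 * (K - 1)) * (r : ℝ))

/-!
Permuting the units maps the set of completely randomized assignments onto itself, so the
first two moments of the assignment indicators are forced by the constraint
`∑ i, W_i(z) = r`: `E W_i(z) = r / N` and, for `i ≠ j`,
`E W_i(z) W_j(z') = r (r - [z = z']) / (N (N - 1))`. Neyman's classical computations follow:
`s²(z)` is unbiased for `S²(z)`, and
`Cov(Ȳ^obs(z), Ȳ^obs(z')) = [z = z'] S²(z) / r - S(z, z') / N`.
Expanding `Var τ̂_A` bilinearly in the coefficients `g_A(z) / 2^(K-1)`, the diagonal terms give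
`∑ z, S²(z) / (2^(2(K-1)) r) = E V̂_A` because `g_A(z)² = 1`, and the remaining terms are the
bilinear expansion of `S_A² / N`.
-/

open scoped BigOperators

section Assignments

variable {K N r : ℕ}

lemma mem_Assignments {ω : Fin N → Combo K} :
    ω ∈ Assignments K N r ↔ ∀ z : Combo K, #{i | ω i = z} = r := by
  simp [Assignments]

lemma comp_perm_mem_Assignments (σ : Equiv.Perm (Fin N)) {ω : Fin N → Combo K}
    (hω : ω ∈ Assignments K N r) : ω ∘ σ ∈ Assignments K N r := by
  refine mem_Assignments.2 fun z => ?_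
  rw [← mem_Assignments.1 hω z]
  exact card_equiv σ (by simp)

lemma Assignments_nonempty (hN : N = r * 2 ^ K) : (Assignments K N r).Nonempty := by
  subst hN
  let e : Fin (r * 2 ^ K) ≃ Fin r × Combo K :=
    finProdFinEquiv.symm.trans ((Equiv.refl _).prodCongr
      (Fintype.equivFinOfCardEq (by simp [Combo])).symm)
  refine ⟨fun i => (e i).2, mem_Assignments.2 fun z => ?_⟩
  have hfiber : #{p : Fin r × Combo K | p.2 = z} = r := by
    rw [show ({p | p.2 = z} : Finset (Fin r × Combo K)) = univ ×ˢ {z} by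
      ext ⟨a, b⟩; simp [eq_comm]]
    simp
  exact (card_equiv e (by simp)).trans hfiber

lemma sum_Wvar {ω : Fin N → Combo K} (hω : ω ∈ Assignments K N r) (z : Combo K) :
    ∑ i, Wvar K N ω i z = r := by
  simp [Wvar, sum_boole, mem_Assignments.1 hω z]

end Assignments

section Expect

variable {K N r : ℕ}

lemma expect_eq_finsetExpect (f : (Fin N → Combo K) → ℝ) :
    expect K N r f = 𝔼 ω ∈ Assignments K N r, f ω :=
  (Finset.expect_eq_sum_div_card _ _).symm

lemma expect_congr {f g : (Fin N → Combo K) → ℝ}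
    (h : ∀ ω ∈ Assignments K N r, f ω = g ω) :
    expect K N r f = expect K N r g := by
  simp only [expect_eq_finsetExpect]
  exact Finset.expect_congr rfl h

lemma expect_const (hN : N = r * 2 ^ K) (a : ℝ) : expect K N r (fun _ => a) = a := by
  rw [expect_eq_finsetExpect, Finset.expect_const (Assignments_nonempty hN)]

lemma expect_sum {ι : Type*} (s : Finset ι) (f : ι → (Fin N → Combo K) → ℝ) :
    expect K N r (fun ω => ∑ i ∈ s, f i ω) = ∑ i ∈ s, expect K N r (f i) := by
  simp only [expect_eq_finsetExpect]
  exact Finset.expect_sum_comm _ _ _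

lemma expect_sub (f g : (Fin N → Combo K) → ℝ) :
    expect K N r (fun ω => f ω - g ω) = expect K N r f - expect K N r g := by
  simp only [expect_eq_finsetExpect]
  exact Finset.expect_sub_distrib _ _ _

lemma expect_const_mul (a : ℝ) (f : (Fin N → Combo K) → ℝ) :
    expect K N r (fun ω => a * f ω) = a * expect K N r f := by
  simp only [expect_eq_finsetExpect]
  exact (Finset.mul_expect _ _ _).symm

lemma expect_comp_perm (σ : Equiv.Perm (Fin N)) (F : (Fin N → Combo K) → ℝ) :
    expect K N r (fun ω => F (ω ∘ σ)) = expect K N r F := by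
  simp only [expect_eq_finsetExpect]
  exact Finset.expect_nbij' (· ∘ σ) (· ∘ σ.symm) (fun ω => comp_perm_mem_Assignments σ)
    (fun ω => comp_perm_mem_Assignments σ.symm) (fun ω _ => by ext; simp)
    (fun ω _ => by ext; simp) (fun _ _ => rfl)

end Expect

section Moments

variable {K N r : ℕ}

lemma Wvar_mul_Wvar_self (ω : Fin N → Combo K) (i : Fin N) (z z' : Combo K) :
    Wvar K N ω i z * Wvar K N ω i z' = (if z = z' then 1 else 0) * Wvar K N ω i z := by
  unfold Wvar
  split_ifs <;> simp_all

lemma expect_Wvar (hN : N = r * 2 ^ K) (i : Fin N) (z : Combo K) :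
    expect K N r (fun ω => Wvar K N ω i z) = r / N := by
  have hsymm (i' : Fin N) :
      expect K N r (fun ω => Wvar K N ω i' z) = expect K N r (fun ω => Wvar K N ω i z) := by
    have h := expect_comp_perm (r := r) (Equiv.swap i i') (fun ω => Wvar K N ω i' z)
    simpa [Wvar] using h.symm
  have hN0 : (N : ℝ) ≠ 0 := by have := i.pos; positivity
  rw [eq_div_iff hN0]
  calc expect K N r (fun ω => Wvar K N ω i z) * N
      = ∑ i', expect K N r (fun ω => Wvar K N ω i' z) := by simp [hsymm, mul_comm]
    _ = expect K N r (fun ω => ∑ i', Wvar K N ω i' z) := (expect_sum _ _).symm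
    _ = expect K N r (fun _ => (r : ℝ)) := expect_congr fun ω hω => sum_Wvar hω z
    _ = r := expect_const hN _

lemma expect_Wvar_mul_Wvar_of_ne (hN : N = r * 2 ^ K) {i j : Fin N} (hij : i ≠ j)
    (z z' : Combo K) :
    expect K N r (fun ω => Wvar K N ω i z * Wvar K N ω j z')
      = r * (r - if z = z' then 1 else 0) / (N * (N - 1)) := by
  have hsymm (j' : Fin N) (hj' : j' ∈ univ.erase i) :
      expect K N r (fun ω => Wvar K N ω i z * Wvar K N ω j' z')
        = expect K N r (fun ω => Wvar K N ω i z * Wvar K N ω j z') := by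
    have h := expect_comp_perm (r := r) (Equiv.swap j j')
      (fun ω => Wvar K N ω i z * Wvar K N ω j z')
    simpa [Wvar, Equiv.swap_apply_of_ne_of_ne hij (ne_of_mem_erase hj').symm] using h
  have hN1 : (N : ℝ) - 1 ≠ 0 := by
    have : 1 < N := by by_contra! h; exact hij (Fin.ext (by omega))
    exact sub_ne_zero.2 (by exact_mod_cast this.ne')
  have hN0 : (N : ℝ) ≠ 0 := by have := i.pos; positivity
  rw [eq_div_iff (mul_ne_zero hN0 hN1)]
  calc expect K N r (fun ω => Wvar K N ω i z * Wvar K N ω j z') * (N * (N - 1))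
      = N * ∑ j' ∈ univ.erase i,
          expect K N r (fun ω => Wvar K N ω i z * Wvar K N ω j' z') := by
        rw [sum_congr rfl hsymm, sum_const, card_erase_of_mem (mem_univ i), card_univ,
          Fintype.card_fin, nsmul_eq_mul, Nat.cast_sub i.pos]
        push_cast; ring
    _ = N * expect K N r (fun ω => (r - if z = z' then 1 else 0) * Wvar K N ω i z) := by
        rw [← expect_sum]
        congr 1
        refine expect_congr fun ω hω => ?_
        rw [← mul_sum, sum_erase_eq_sub (mem_univ i), sum_Wvar hω, mul_sub,
          Wvar_mul_Wvar_self]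
        ring
    _ = r * (r - if z = z' then 1 else 0) := by
        rw [expect_const_mul, expect_Wvar hN]
        field_simp

lemma covariance_eq_expect_mul_sub (hN : N = r * 2 ^ K) (f g : (Fin N → Combo K) → ℝ) :
    covariance K N r f g
      = expect K N r (fun ω => f ω * g ω) - expect K N r f * expect K N r g := by
  have hne := Assignments_nonempty hN
  simp only [covariance, expect_eq_finsetExpect, mul_sub, sub_mul, Finset.expect_sub_distrib,
    ← Finset.mul_expect, ← Finset.expect_mul, Finset.expect_const hne]
  ring

lemma variance_sum_mul {ι : Type*} [Fintype ι] (a : ι → ℝ)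
    (X : ι → (Fin N → Combo K) → ℝ) :
    variance K N r (fun ω => ∑ z, a z * X z ω)
      = ∑ z, ∑ z', a z * a z' * covariance K N r (X z) (X z') := by
  have hdev (ω : Fin N → Combo K) :
      (∑ z, a z * X z ω - expect K N r (fun ω => ∑ z, a z * X z ω)) ^ 2
        = ∑ z, ∑ z', a z * a z' *
            ((X z ω - expect K N r (X z)) * (X z' ω - expect K N r (X z'))) := by
    simp only [expect_sum, expect_const_mul, ← sum_sub_distrib, ← mul_sub, sq, sum_mul_sum]
    exact sum_congr rfl fun _ _ => sum_congr rfl fun _ _ => by ring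
  simp only [variance, hdev]
  simp only [covariance, expect_sum, expect_const_mul]

end Moments

section Neyman

variable {K N r : ℕ} (Y : Fin N → Combo K → ℝ)

lemma YbarObs_eq_sum_Wvar (ω : Fin N → Combo K) (z : Combo K) :
    YbarObs K N r Y ω z = (r : ℝ)⁻¹ * ∑ i, Y i z * Wvar K N ω i z := by
  simp [YbarObs, Wvar, div_eq_inv_mul]

lemma expect_YbarObs (hN : N = r * 2 ^ K) (hr : r ≠ 0) (z : Combo K) :
    expect K N r (fun ω => YbarObs K N r Y ω z) = Ybar K N Y z := by
  have hN0 : (N : ℝ) ≠ 0 := by rw [hN]; positivity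
  simp only [YbarObs_eq_sum_Wvar, expect_const_mul, expect_sum, expect_Wvar hN, Ybar]
  rw [← sum_mul]
  field_simp

lemma expect_YbarObs_mul (hN : N = r * 2 ^ K) (z z' : Combo K) :
    expect K N r (fun ω => YbarObs K N r Y ω z * YbarObs K N r Y ω z')
      = ((if z = z' then (r : ℝ) / N else 0) * ∑ i, Y i z * Y i z'
          + r * (r - if z = z' then 1 else 0) / (N * (N - 1))
            * ((∑ i, Y i z) * (∑ i, Y i z') - ∑ i, Y i z * Y i z')) / r ^ 2 := by
  have hdiag (i : Fin N) : expect K N r (fun ω => Wvar K N ω i z * Wvar K N ω i z')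
      = (if z = z' then 1 else 0) * (r / N) := by
    simp only [Wvar_mul_Wvar_self, expect_const_mul, expect_Wvar hN]
  have hrow (i : Fin N) :
      ∑ j, Y i z * Y j z' * expect K N r (fun ω => Wvar K N ω i z * Wvar K N ω j z')
        = (if z = z' then (r : ℝ) / N else 0) * (Y i z * Y i z')
          + r * (r - if z = z' then 1 else 0) / (N * (N - 1))
            * (Y i z * ∑ j, Y j z' - Y i z * Y i z') := by
    rw [← add_sum_erase _ _ (mem_univ i), hdiag,
      sum_congr rfl fun j hj => by
        rw [expect_Wvar_mul_Wvar_of_ne hN (ne_of_mem_erase hj).symm],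
      ← sum_mul, ← mul_sum, sum_erase_eq_sub (mem_univ i)]
    split_ifs <;> ring
  have hprod (ω : Fin N → Combo K) : YbarObs K N r Y ω z * YbarObs K N r Y ω z'
      = ((r : ℝ) ^ 2)⁻¹
          * ∑ i, ∑ j, Y i z * Y j z' * (Wvar K N ω i z * Wvar K N ω j z') := by
    rw [YbarObs_eq_sum_Wvar, YbarObs_eq_sum_Wvar, mul_mul_mul_comm, ← sq, inv_pow, sum_mul_sum]
    exact congrArg _ (sum_congr rfl fun _ _ => sum_congr rfl fun _ _ => by ring)
  simp only [hprod, expect_const_mul, expect_sum, hrow, sum_add_distrib, ← mul_sum, ← sum_mul,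
    mul_sub, sum_sub_distrib]
  ring

lemma Scov_self (z : Combo K) : Scov K N Y z z = Ssq K N Y z := by
  simp [Scov, Ssq, sq]

lemma Scov_eq (z z' : Combo K) :
    Scov K N Y z z'
      = (∑ i, Y i z * Y i z' - (∑ i, Y i z) * (∑ i, Y i z') / N) / (N - 1) := by
  obtain rfl | hN0 := eq_or_ne N 0
  · simp [Scov]
  have hN0' : (N : ℝ) ≠ 0 := Nat.cast_ne_zero.2 hN0
  simp only [Scov, Ybar, sub_mul, mul_sub, sum_sub_distrib, ← sum_mul, ← mul_sum, sum_const,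
    card_univ, Fintype.card_fin, nsmul_eq_mul]
  field_simp
  ring

lemma covariance_YbarObs (hN : N = r * 2 ^ K) (hN1 : 1 < N) (z z' : Combo K) :
    covariance K N r (fun ω => YbarObs K N r Y ω z) (fun ω => YbarObs K N r Y ω z')
      = (if z = z' then Ssq K N Y z / r else 0) - Scov K N Y z z' / N := by
  have hr : r ≠ 0 := by rintro rfl; omega
  have hN0 : (N : ℝ) ≠ 0 := by positivity
  have hN1' : (N : ℝ) - 1 ≠ 0 := sub_ne_zero.2 (by exact_mod_cast hN1.ne')
  rw [covariance_eq_expect_mul_sub hN, expect_YbarObs_mul Y hN, expect_YbarObs Y hN hr,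
    expect_YbarObs Y hN hr, Scov_eq]
  split_ifs with hzz
  · subst hzz
    rw [← Scov_self, Scov_eq, Ybar]
    field_simp
    ring
  · simp only [Ybar]
    field_simp
    ring

lemma sampleVar_eq_of_mem_Assignments {ω : Fin N → Combo K} (hω : ω ∈ Assignments K N r)
    (hr : r ≠ 0) (z : Combo K) :
    sampleVar K N r Y ω z
      = ((r : ℝ) - 1)⁻¹ * (∑ i, Y i z ^ 2 * Wvar K N ω i z
          - r * (YbarObs K N r Y ω z * YbarObs K N r Y ω z)) := by
  set m := YbarObs K N r Y ω z with hm
  have hsum : ∑ i, Y i z * Wvar K N ω i z = r * m := by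
    rw [hm, YbarObs_eq_sum_Wvar, ← mul_assoc, mul_inv_cancel₀ (Nat.cast_ne_zero.2 hr),
      one_mul]
  have hdev : ∑ i, (if ω i = z then (Y i z - m) ^ 2 else 0)
      = ∑ i, (Y i z ^ 2 * Wvar K N ω i z - 2 * m * (Y i z * Wvar K N ω i z)
          + m ^ 2 * Wvar K N ω i z) :=
    sum_congr rfl fun i _ => by unfold Wvar; split_ifs <;> ring
  rw [sampleVar, hdev, sum_add_distrib, sum_sub_distrib, ← mul_sum, ← mul_sum, hsum,
    sum_Wvar hω, inv_mul_eq_div]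
  ring

lemma expect_sampleVar (hN : N = r * 2 ^ K) (hr : 2 ≤ r) (z : Combo K) :
    expect K N r (fun ω => sampleVar K N r Y ω z) = Ssq K N Y z := by
  have hr0 : (r : ℝ) ≠ 0 := by positivity
  have hr1 : (r : ℝ) - 1 ≠ 0 := by
    rw [sub_ne_zero]; exact_mod_cast (by omega : r ≠ 1)
  have hN0 : (N : ℝ) ≠ 0 := by rw [hN]; positivity
  have hN1 : 1 < N := hN ▸ lt_of_lt_of_le hr (Nat.le_mul_of_pos_right r (by positivity))
  have hN1' : (N : ℝ) - 1 ≠ 0 := sub_ne_zero.2 (by exact_mod_cast hN1.ne')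
  rw [expect_congr fun ω hω => sampleVar_eq_of_mem_Assignments Y hω (by omega) z]
  simp only [expect_const_mul, expect_sub, expect_sum, expect_Wvar hN,
    expect_YbarObs_mul Y hN, ← Scov_self, Scov_eq, ↓reduceIte, ← sum_mul]
  field_simp
  ring

end Neyman

section Factorial

variable {K N r : ℕ} (Y : Fin N → Combo K → ℝ) (A : Finset (Fin K))

lemma gA_mul_self (z : Combo K) : gA K A z * gA K A z = 1 := by
  rw [gA, ← prod_mul_distrib]
  exact prod_eq_one fun k _ => by split_ifs <;> norm_num

lemma tauUnit_sub_tauBar (i : Fin N) :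
    tauUnit K N Y A i - tauBar K N Y A
      = ∑ z, gA K A z / 2 ^ (K - 1) * (Y i z - Ybar K N Y z) := by
  have htauBar : tauBar K N Y A = ∑ z, gA K A z / 2 ^ (K - 1) * Ybar K N Y z := by
    simp only [tauBar, tauUnit, Ybar, mul_sum, sum_div]
    rw [sum_comm]
    exact sum_congr rfl fun _ _ => sum_congr rfl fun _ _ => by ring
  rw [htauBar, tauUnit, sum_div, ← sum_sub_distrib]
  exact sum_congr rfl fun _ _ => by ring

lemma SsqA_eq_sum_Scov :
    SsqA K N Y A
      = ∑ z, ∑ z', gA K A z / 2 ^ (K - 1) * (gA K A z' / 2 ^ (K - 1)) * Scov K N Y z z' := by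
  simp only [SsqA, tauUnit_sub_tauBar, sq, sum_mul_sum, Scov]
  rw [sum_comm, sum_div]
  refine sum_congr rfl fun z _ => ?_
  rw [sum_comm, sum_div]
  refine sum_congr rfl fun z' _ => ?_
  rw [mul_div_assoc', mul_sum]
  exact congrArg (· / _) (sum_congr rfl fun _ _ => by ring)

lemma tauHat_eq_sum (ω : Fin N → Combo K) :
    tauHat K N r Y A ω = ∑ z, gA K A z / 2 ^ (K - 1) * YbarObs K N r Y ω z := by
  rw [tauHat, sum_div]
  exact sum_congr rfl fun _ _ => by ring

lemma variance_tauHat (hN : N = r * 2 ^ K) (hN1 : 1 < N) :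
    variance K N r (tauHat K N r Y A)
      = (∑ z, Ssq K N Y z) / ((2 : ℝ) ^ (2 * (K - 1)) * r) - 1 / (N : ℝ) * SsqA K N Y A := by
  have hdiag (z : Combo K) :
      gA K A z / 2 ^ (K - 1) * (gA K A z / 2 ^ (K - 1)) * (Ssq K N Y z / r)
        = Ssq K N Y z / ((2 : ℝ) ^ (2 * (K - 1)) * r) := by
    rw [div_mul_div_comm, gA_mul_self, pow_mul']
    ring
  rw [show tauHat K N r Y A = _ from funext (tauHat_eq_sum Y A), variance_sum_mul]
  simp only [covariance_YbarObs Y hN hN1, mul_sub, mul_ite, mul_zero, sum_sub_distrib,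
    sum_ite_eq, mem_univ, ↓reduceIte, hdiag, SsqA_eq_sum_Scov, mul_sum, sum_div]
  congr 1
  exact sum_congr rfl fun _ _ => sum_congr rfl fun _ _ => by ring

lemma expect_VhatNey (hN : N = r * 2 ^ K) (hr : 2 ≤ r) :
    expect K N r (VhatNey K N r Y) = (∑ z, Ssq K N Y z) / ((2 : ℝ) ^ (2 * (K - 1)) * r) := by
  have hV : VhatNey K N r Y
      = fun ω => ((2 : ℝ) ^ (2 * (K - 1)) * r)⁻¹ * ∑ z, sampleVar K N r Y ω z :=
    funext fun _ => div_eq_inv_mul _ _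
  rw [hV, expect_const_mul, expect_sum, div_eq_inv_mul]
  simp only [expect_sampleVar Y hN hr]

end Factorial

theorem VhatNey_upper_bound_general (K N r : ℕ) (hr : 2 ≤ r) (hN : N = r * 2 ^ K)
    (Y : Fin N → Combo K → ℝ) (A : Finset (Fin K)) :
    expect K N r (VhatNey K N r Y) =
        variance K N r (tauHat K N r Y A) + (1 / (N : ℝ)) * SsqA K N Y A ∧
      variance K N r (tauHat K N r Y A) ≤ expect K N r (VhatNey K N r Y) := by
  have hN1 : 1 < N := hN ▸ lt_of_lt_of_le hr (Nat.le_mul_of_pos_right r (by positivity))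
  have hSsqA : 0 ≤ SsqA K N Y A := by
    have : (1 : ℝ) ≤ N := by exact_mod_cast hN1.le
    exact div_nonneg (sum_nonneg fun _ _ => sq_nonneg _) (by linarith)
  rw [expect_VhatNey Y hN hr, variance_tauHat Y A hN hN1]
  exact ⟨by ring, sub_le_self _ (by positivity)⟩

/-- For r ≥ 2 and every nonempty A,
E[V̂_A] = Var(τ̂_A) + (1/N) S_A²; in particular E[V̂_A] ≥ Var(τ̂_A). -/
theorem VhatNey_upper_bound (K N r : ℕ) (hK : 1 ≤ K) (hr : 2 ≤ r) (hN : N = r * 2 ^ K)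
    (Y : Fin N → Combo K → ℝ) (A : Finset (Fin K)) (hA : A.Nonempty) :
    expect K N r (VhatNey K N r Y) =
        variance K N r (tauHat K N r Y A) + (1 / (N : ℝ)) * SsqA K N Y A ∧
      variance K N r (tauHat K N r Y A) ≤ expect K N r (VhatNey K N r Y) :=
  VhatNey_upper_bound_general K N r hr hN Y A
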